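/- arXiv:2401.12952 — 3 statements merged into one kernel-verified Lean document; each statement's English description precedes it below -/
import Mathlib

section
/- For matrices (or elements of a Banach algebra) Ω and C, the derivative of t ↦ exp(Ω(t)) satisfies d/dt exp(Ω(t)) = (∫_0^1 exp(x·Ω(t)) · Ω'(t) · exp((1-x)·Ω(t)) dx), i.e., (d/dt exp(Ω(t)))·exp(-Ω(t)) = ∫_0^1 exp(x·Ω(t)) · Ω'(t) · exp(-x·Ω(t)) dx. -/
open NormedSpace intervalIntegral Filter Topology

/-!
Differentiating `x ↦ exp (x • a) * exp ((1 - x) • b)` and integrating over `[0, 1]` gives Duhamel's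
formula `exp a - exp b = ∫₀¹ exp (x • a) * (a - b) * exp ((1 - x) • b) dx`. With `a = Ω s`,
`b = Ω t` and `Ω s - Ω t = (s - t) • dslope Ω t s`, the increment `exp (Ω s) - exp (Ω t)` is
`(s - t)` times an integral that depends continuously on `(Ω s, dslope Ω t s)`; its value at
`s = t` is therefore the derivative.
-/

theorem hasDerivAt_of_sub_eq_sub_smul {𝕜 E : Type*} [NontriviallyNormedField 𝕜]
    [NormedAddCommGroup E] [NormedSpace 𝕜 E] {f g : 𝕜 → E} {x : 𝕜}
    (hfg : ∀ y, f y - f x = (y - x) • g y) (hg : ContinuousAt g x) :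
    HasDerivAt f (g x) x := by
  rw [hasDerivAt_iff_tendsto_slope]
  refine hg.tendsto.mono_left nhdsWithin_le_nhds |>.congr' ?_
  filter_upwards [self_mem_nhdsWithin] with y hy
  rw [slope_def_module, hfg, smul_smul, inv_mul_cancel₀ (sub_ne_zero.2 hy), one_smul]

theorem hasDerivAt_exp_smul_mul_exp_one_sub_smul {𝕂 𝔸 : Type*} [RCLike 𝕂] [NormedRing 𝔸]
    [NormedAlgebra 𝕂 𝔸] [CompleteSpace 𝔸] (a b : 𝔸) (u : 𝕂) :
    HasDerivAt (fun u : 𝕂 => exp (u • a) * exp ((1 - u) • b))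
      (exp (u • a) * (a - b) * exp ((1 - u) • b)) u := by
  have ha := hasDerivAt_exp_smul_const a u
  have hb := (hasDerivAt_exp_smul_const' b (1 - u)).comp_const_sub 1 u
  convert ha.mul hb using 1
  · rfl
  · rw [mul_neg, ← sub_eq_add_neg, mul_sub, sub_mul, mul_assoc _ b]

section Duhamel

variable {𝔸 : Type*} [NormedRing 𝔸] [NormedAlgebra ℝ 𝔸] [CompleteSpace 𝔸]

-- The lemmas about `NormedSpace.exp` used below are stated for normed `ℚ`-algebras.
noncomputable local instance : NormedAlgebra ℚ 𝔸 := NormedAlgebra.restrictScalars ℚ ℝ 𝔸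

theorem exp_sub_exp_eq_integral (a b : 𝔸) :
    exp a - exp b = ∫ x in (0:ℝ)..1, exp (x • a) * (a - b) * exp ((1 - x) • b) := by
  rw [integral_eq_sub_of_hasDerivAt (fun u _ => hasDerivAt_exp_smul_mul_exp_one_sub_smul a b u)
    ((by fun_prop : Continuous _).intervalIntegrable 0 1)]
  simp

theorem continuous_intervalIntegral_exp_smul_mul_mul_exp_smul (b : 𝔸) :
    Continuous fun p : 𝔸 × 𝔸 => ∫ x in (0:ℝ)..1, exp (x • p.1) * p.2 * exp ((1 - x) • b) := by
  fun_prop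

end Duhamel

/-- Derivative of `t ↦ exp (Ω t)` as an integral formula:
`d/dt exp(Ω(t)) = ∫_0^1 exp(x·Ω(t)) · Ω'(t) · exp((1-x)·Ω(t)) dx`. -/
theorem deriv_exp_eq_integral
    {𝔸 : Type*} [NormedRing 𝔸] [NormedAlgebra ℂ 𝔸] [CompleteSpace 𝔸]
    (Ω : ℝ → 𝔸) (hΩ : ContDiff ℝ 1 Ω) (t : ℝ) :
    HasDerivAt (fun s => exp (Ω s))
      (∫ x in (0:ℝ)..1,
        exp (x • Ω t) * deriv Ω t * exp ((1 - x) • Ω t)) t := by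
  have hd : DifferentiableAt ℝ Ω t := hΩ.differentiable one_ne_zero t
  have hsub : ∀ s, exp (Ω s) - exp (Ω t) =
      (s - t) • ∫ x in (0:ℝ)..1, exp (x • Ω s) * dslope Ω t s * exp ((1 - x) • Ω t) := by
    intro s
    simp_rw [exp_sub_exp_eq_integral, ← sub_smul_dslope Ω t s, ← integral_smul, mul_smul_comm,
      smul_mul_assoc]
  have hcont : ContinuousAt
      (fun s => ∫ x in (0:ℝ)..1, exp (x • Ω s) * dslope Ω t s * exp ((1 - x) • Ω t)) t :=
    (continuous_intervalIntegral_exp_smul_mul_mul_exp_smul (Ω t)).continuousAt.comp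
      (hd.continuousAt.prodMk (continuousAt_dslope_same.2 hd))
  simpa [dslope_same] using hasDerivAt_of_sub_eq_sub_smul hsub hcont
end

section
/- For continuous A : ℝ → M_d(ℂ), P₁(t)³ equals the sum of A(σ) over all six permutations σ of {1,2,3}, where A(i₁i₂i₃) = ∫_0^t dt₁∫_0^{t₁}dt₂∫_0^{t₂}dt₃ A(t_{i₁})A(t_{i₂})A(t_{i₃}). -/
attribute [local instance] Matrix.linftyOpNormedRing Matrix.linftyOpNormedAlgebra

/-- The time-ordered iterated integral
`A(i₁i₂i₃) = ∫_0^t dt₁∫_0^{t₁}dt₂∫_0^{t₂}dt₃ A(t_{i₁})A(t_{i₂})A(t_{i₃})`. -/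
noncomputable def orderedIntegral3 {d : ℕ} (A : ℝ → Matrix (Fin d) (Fin d) ℂ)
    (t : ℝ) (i₁ i₂ i₃ : Fin 3) : Matrix (Fin d) (Fin d) ℂ :=
  ∫ t₁ in (0:ℝ)..t, ∫ t₂ in (0:ℝ)..t₁, ∫ t₃ in (0:ℝ)..t₂,
    A (![t₁, t₂, t₃] i₁) * A (![t₁, t₂, t₃] i₂) * A (![t₁, t₂, t₃] i₃)

/-!
Write `P(s) = ∫_0^s A`. Group the six orderings in pairs by the position of `A(t₁)` in the
product, so that the members of a pair differ by exchanging `t₂` and `t₃`. The product rule gives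
`∫_0^s (A b P + P b A) = P(s) b P(s)` for every constant `b`, so for fixed `t₁` the inner double
integrals of a pair add up to `A(t₁) P(t₁)²`, `P(t₁) A(t₁) P(t₁)` or `P(t₁)² A(t₁)`. Integrating
over `t₁`, the product rule once more gives `∫_0^t (A P² + P A P + P² A) = P(t)³`.
-/

open MeasureTheory intervalIntegral

theorem continuous_parametric_iteratedIntegral {E : Type*} [NormedAddCommGroup E]
    [NormedSpace ℝ E] {F : ℝ → ℝ → ℝ → E}
    (hF : Continuous fun p : ℝ × ℝ × ℝ => F p.1 p.2.1 p.2.2) :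
    Continuous fun t₁ => ∫ t₂ in (0:ℝ)..t₁, ∫ t₃ in (0:ℝ)..t₂, F t₁ t₂ t₃ := by
  have inner : Continuous fun p : ℝ × ℝ => ∫ t₃ in (0:ℝ)..p.2, F p.1 p.2 t₃ :=
    continuous_parametric_intervalIntegral_of_continuous
      (f := fun (p : ℝ × ℝ) t₃ => F p.1 p.2 t₃)
      (hF.comp (continuous_fst.fst.prodMk (continuous_fst.snd.prodMk continuous_snd)))
      continuous_snd
  exact continuous_parametric_intervalIntegral_of_continuous
    (f := fun t₁ t₂ => ∫ t₃ in (0:ℝ)..t₂, F t₁ t₂ t₃) inner continuous_id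

section NormedAlgebra

variable {E : Type*} [NormedRing E] [NormedAlgebra ℝ E] [CompleteSpace E]

theorem intervalIntegral_const_mul_mul_const {f : ℝ → E} {a b : ℝ}
    (hf : IntervalIntegrable f volume a b) (c e : E) :
    ∫ u in a..b, c * f u * e = c * (∫ u in a..b, f u) * e :=
  ((ContinuousLinearMap.mul ℝ E).flip e ∘L ContinuousLinearMap.mul ℝ E c).intervalIntegral_comp_comm
    hf

variable {A : ℝ → E}

theorem integral_mul_primitive_add_primitive_mul (hA : Continuous A) (b : E) (s : ℝ) :
    ∫ u in (0:ℝ)..s, (A u * b * (∫ v in (0:ℝ)..u, A v) + (∫ v in (0:ℝ)..u, A v) * b * A u)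
      = (∫ u in (0:ℝ)..s, A u) * b * ∫ u in (0:ℝ)..s, A u := by
  have hderiv : ∀ x, HasDerivAt (fun u => ∫ v in (0:ℝ)..u, A v) (A x) x :=
    fun x => (hA.integral_hasStrictDerivAt 0 x).hasDerivAt
  simpa [mul_assoc] using
    integral_deriv_mul_eq_sub (a := 0) (b := s) (fun x _ => (hderiv x).mul_const b)
      (fun x _ => hderiv x)
      ((hA.mul continuous_const).intervalIntegrable _ _) (hA.intervalIntegrable _ _)

theorem iteratedIntegral_add_swap (hA : Continuous A) (a b c : E) (s : ℝ) :
    (∫ t₂ in (0:ℝ)..s, ∫ t₃ in (0:ℝ)..t₂, a * A t₂ * b * A t₃ * c)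
      + (∫ t₂ in (0:ℝ)..s, ∫ t₃ in (0:ℝ)..t₂, a * A t₃ * b * A t₂ * c)
      = a * (∫ u in (0:ℝ)..s, A u) * b * (∫ u in (0:ℝ)..s, A u) * c := by
  have hP : Continuous fun u => ∫ v in (0:ℝ)..u, A v :=
    continuous_primitive (fun _ _ => hA.intervalIntegrable _ _) 0
  have inner₁ : ∀ t₂, ∫ t₃ in (0:ℝ)..t₂, a * A t₂ * b * A t₃ * c
      = a * (A t₂ * b * ∫ v in (0:ℝ)..t₂, A v) * c := fun t₂ => by
    simpa only [mul_assoc] using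
      intervalIntegral_const_mul_mul_const (hA.intervalIntegrable 0 t₂) (a * A t₂ * b) c
  have inner₂ : ∀ t₂, ∫ t₃ in (0:ℝ)..t₂, a * A t₃ * b * A t₂ * c
      = a * ((∫ v in (0:ℝ)..t₂, A v) * b * A t₂) * c := fun t₂ => by
    simpa only [mul_assoc] using
      intervalIntegral_const_mul_mul_const (hA.intervalIntegrable 0 t₂) a (b * A t₂ * c)
  have hX : IntervalIntegrable (fun u => A u * b * ∫ v in (0:ℝ)..u, A v) volume 0 s :=
    ((hA.mul continuous_const).mul hP).intervalIntegrable _ _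
  have hY : IntervalIntegrable (fun u => (∫ v in (0:ℝ)..u, A v) * b * A u) volume 0 s :=
    ((hP.mul continuous_const).mul hA).intervalIntegrable _ _
  rw [integral_congr fun t₂ _ => inner₁ t₂, integral_congr fun t₂ _ => inner₂ t₂,
    intervalIntegral_const_mul_mul_const hX, intervalIntegral_const_mul_mul_const hY,
    ← add_mul, ← mul_add, ← intervalIntegral.integral_add hX hY,
    integral_mul_primitive_add_primitive_mul hA]
  simp only [mul_assoc]

theorem integral_iteratedIntegral_add_swap (hA : Continuous A) {a b c : ℝ → E}
    (ha : Continuous a) (hb : Continuous b) (hc : Continuous c) (t : ℝ) :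
    (∫ t₁ in (0:ℝ)..t, ∫ t₂ in (0:ℝ)..t₁, ∫ t₃ in (0:ℝ)..t₂, a t₁ * A t₂ * b t₁ * A t₃ * c t₁)
      + (∫ t₁ in (0:ℝ)..t, ∫ t₂ in (0:ℝ)..t₁, ∫ t₃ in (0:ℝ)..t₂, a t₁ * A t₃ * b t₁ * A t₂ * c t₁)
      = ∫ t₁ in (0:ℝ)..t,
          a t₁ * (∫ u in (0:ℝ)..t₁, A u) * b t₁ * (∫ u in (0:ℝ)..t₁, A u) * c t₁ := by
  rw [← intervalIntegral.integral_add]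
  · exact integral_congr fun t₁ _ => iteratedIntegral_add_swap hA (a t₁) (b t₁) (c t₁) t₁
  all_goals exact (continuous_parametric_iteratedIntegral (by fun_prop)).intervalIntegrable _ _

theorem integral_deriv_primitive_cube (hA : Continuous A) (t : ℝ) :
    ∫ s in (0:ℝ)..t, (A s * (∫ u in (0:ℝ)..s, A u) * (∫ u in (0:ℝ)..s, A u)
        + (∫ u in (0:ℝ)..s, A u) * A s * (∫ u in (0:ℝ)..s, A u)
        + (∫ u in (0:ℝ)..s, A u) * (∫ u in (0:ℝ)..s, A u) * A s)
      = (∫ s in (0:ℝ)..t, A s) ^ 3 := by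
  have hderiv : ∀ x, HasDerivAt (fun u => ∫ v in (0:ℝ)..u, A v) (A x) x :=
    fun x => (hA.integral_hasStrictDerivAt 0 x).hasDerivAt
  have hcont : Continuous fun u => ∫ v in (0:ℝ)..u, A v :=
    continuous_primitive (fun _ _ => hA.intervalIntegrable _ _) 0
  have hcube : ∀ x, HasDerivAt (fun u => (∫ v in (0:ℝ)..u, A v) ^ 3)
      (A x * (∫ u in (0:ℝ)..x, A u) * (∫ u in (0:ℝ)..x, A u)
        + (∫ u in (0:ℝ)..x, A u) * A x * (∫ u in (0:ℝ)..x, A u)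
        + (∫ u in (0:ℝ)..x, A u) * (∫ u in (0:ℝ)..x, A u) * A x) x := fun x => by
    convert ((hderiv x).mul (hderiv x)).mul (hderiv x) using 1
    · funext u; simp only [Pi.mul_apply, pow_three, mul_assoc]
    · simp only [Pi.mul_apply, add_mul]
  rw [integral_eq_sub_of_hasDerivAt (fun x _ => hcube x)
    (Continuous.intervalIntegrable (by fun_prop) _ _)]
  simp

end NormedAlgebra

theorem P1_cubed_eq_sum_ordered_general
    {d : ℕ} (A : ℝ → Matrix (Fin d) (Fin d) ℂ)
    (hA : Continuous A) (t : ℝ) :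
    (∫ s in (0:ℝ)..t, A s) ^ 3
      = orderedIntegral3 A t 0 1 2 + orderedIntegral3 A t 0 2 1
        + orderedIntegral3 A t 1 0 2 + orderedIntegral3 A t 1 2 0
        + orderedIntegral3 A t 2 0 1 + orderedIntegral3 A t 2 1 0 := by
  have hP : Continuous fun s => ∫ u in (0:ℝ)..s, A u :=
    continuous_primitive (fun _ _ => hA.intervalIntegrable _ _) 0
  have h1 : Continuous fun _ : ℝ => (1 : Matrix (Fin d) (Fin d) ℂ) := continuous_const
  have first : orderedIntegral3 A t 0 1 2 + orderedIntegral3 A t 0 2 1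
      = ∫ s in (0:ℝ)..t, A s * (∫ u in (0:ℝ)..s, A u) * (∫ u in (0:ℝ)..s, A u) := by
    simpa [orderedIntegral3] using integral_iteratedIntegral_add_swap hA hA h1 h1 t
  have middle : orderedIntegral3 A t 1 0 2 + orderedIntegral3 A t 2 0 1
      = ∫ s in (0:ℝ)..t, (∫ u in (0:ℝ)..s, A u) * A s * (∫ u in (0:ℝ)..s, A u) := by
    simpa [orderedIntegral3] using integral_iteratedIntegral_add_swap hA h1 hA h1 t
  have last : orderedIntegral3 A t 1 2 0 + orderedIntegral3 A t 2 1 0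
      = ∫ s in (0:ℝ)..t, (∫ u in (0:ℝ)..s, A u) * (∫ u in (0:ℝ)..s, A u) * A s := by
    simpa [orderedIntegral3] using integral_iteratedIntegral_add_swap hA h1 h1 hA t
  rw [← integral_deriv_primitive_cube hA, intervalIntegral.integral_add,
    intervalIntegral.integral_add, ← first, ← middle, ← last]
  · abel
  all_goals exact Continuous.intervalIntegrable (by fun_prop) _ _

/-- `P₁(t)³` is the sum of `A(σ)` over all six permutations of `{1,2,3}`. -/
theorem P1_cubed_eq_sum_ordered
    {d : ℕ} (A : ℝ → Matrix (Fin d) (Fin d) ℂ)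
    (hA : Continuous A) (t : ℝ) (ht : 0 ≤ t) :
    (∫ s in (0:ℝ)..t, A s) ^ 3
      = orderedIntegral3 A t 0 1 2 + orderedIntegral3 A t 0 2 1
        + orderedIntegral3 A t 1 0 2 + orderedIntegral3 A t 1 2 0
        + orderedIntegral3 A t 2 0 1 + orderedIntegral3 A t 2 1 0 :=
  P1_cubed_eq_sum_ordered_general A hA t
end

section
/- The third Wilcox exponent W₃ = P₃ − P₁P₂ + ⅓P₁³ equals ⅓A(123) + ⅓A(132) − ⅔A(213) + ⅓A(231) − ⅔A(312) + ⅓A(321) in terms of time-ordered iterated integrals. -/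
attribute [local instance] Matrix.linftyOpNormedRing Matrix.linftyOpNormedAlgebra

/-!
Write `P(x) = ∫_0^x A`. Everything follows from integration by parts,
`(∫_0^t f)(∫_0^t g) = ∫_0^t (f(x) ∫_0^x g + (∫_0^x f) g(x))`. In the outer variable it gives
`P₁P₂ = A(123) + ∫_0^t PAP` and `P₁³ = ∫_0^t (APP + PAP + PPA)`. In the inner variables it
identifies `PAP` as the `t₁`-integrand of `A(213) + A(312)`, and `APP`, `PPA` as those of
`A(123) + A(132)` and `A(231) + A(321)`. So `P₁P₂ = A(123) + A(213) + A(312)` and `P₁³` is the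
sum of all six ordered integrals, of which `W₃` is then a linear combination.
-/

open MeasureTheory

namespace intervalIntegral

variable {E : Type*} [NormedRing E] [NormedAlgebra ℝ E] [CompleteSpace E] {f g : ℝ → E} {a b : ℝ}

theorem integral_const_mul_of_intervalIntegrable (hf : IntervalIntegrable f volume a b) (c : E) :
    ∫ x in a..b, c * f x = c * ∫ x in a..b, f x :=
  (ContinuousLinearMap.mul ℝ E c).intervalIntegral_comp_comm hf

theorem integral_mul_const_of_intervalIntegrable (hf : IntervalIntegrable f volume a b) (c : E) :
    ∫ x in a..b, f x * c = (∫ x in a..b, f x) * c :=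
  ((ContinuousLinearMap.mul ℝ E).flip c).intervalIntegral_comp_comm hf

theorem integral_const_mul_mul_const_of_intervalIntegrable (hf : IntervalIntegrable f volume a b)
    (c d : E) : ∫ x in a..b, c * f x * d = c * (∫ x in a..b, f x) * d := by
  rw [integral_mul_const_of_intervalIntegrable (hf.const_mul c),
    integral_const_mul_of_intervalIntegrable hf]

theorem integral_mul_integral_eq_integral (hf : Continuous f) (hg : Continuous g) (t : ℝ) :
    (∫ s in (0:ℝ)..t, f s) * (∫ s in (0:ℝ)..t, g s)
      = ∫ x in (0:ℝ)..t, (f x * ∫ s in (0:ℝ)..x, g s) + (∫ s in (0:ℝ)..x, f s) * g x := by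
  rw [integral_deriv_mul_eq_sub (fun x _ => (hf.integral_hasStrictDerivAt 0 x).hasDerivAt)
    (fun x _ => (hg.integral_hasStrictDerivAt 0 x).hasDerivAt) (hf.intervalIntegrable _ _)
    (hg.intervalIntegrable _ _)]
  simp

end intervalIntegral

open intervalIntegral

section OrderedIntegrand

variable {E : Type*} [NormedRing E] [NormedSpace ℝ E] {A : ℝ → E}

noncomputable def orderedIntegrand3 (A : ℝ → E) (i₁ i₂ i₃ : Fin 3) (x : ℝ) : E :=
  ∫ t₂ in (0:ℝ)..x, ∫ t₃ in (0:ℝ)..t₂,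
    A (![x, t₂, t₃] i₁) * A (![x, t₂, t₃] i₂) * A (![x, t₂, t₃] i₃)

theorem orderedIntegral3_eq_integral {d : ℕ} (A : ℝ → Matrix (Fin d) (Fin d) ℂ) (t : ℝ)
    (i₁ i₂ i₃ : Fin 3) :
    orderedIntegral3 A t i₁ i₂ i₃ = ∫ x in (0:ℝ)..t, orderedIntegrand3 A i₁ i₂ i₃ x :=
  rfl

@[fun_prop]
theorem continuous_orderedIntegrand3 (hA : Continuous A) (i₁ i₂ i₃ : Fin 3) :
    Continuous (orderedIntegrand3 A i₁ i₂ i₃) := by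
  unfold orderedIntegrand3
  fun_prop

end OrderedIntegrand

section OrderedIntegrandIdentities

variable {E : Type*} [NormedRing E] [NormedAlgebra ℝ E] [CompleteSpace E] {A : ℝ → E}

theorem orderedIntegrand3_012 (hA : Continuous A) (x : ℝ) :
    orderedIntegrand3 A 0 1 2 x = A x * ∫ s in (0:ℝ)..x, A s * ∫ u in (0:ℝ)..s, A u := by
  refine (integral_congr fun s _ => ?_).trans
    (integral_const_mul_of_intervalIntegrable (Continuous.intervalIntegrable (by fun_prop) _ _) _)
  simp only [Matrix.cons_val_zero, Matrix.cons_val_one, Matrix.cons_val,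
    integral_const_mul_of_intervalIntegrable (hA.intervalIntegrable 0 s)]
  rw [mul_assoc]

theorem orderedIntegrand3_021 (hA : Continuous A) (x : ℝ) :
    orderedIntegrand3 A 0 2 1 x = A x * ∫ s in (0:ℝ)..x, (∫ u in (0:ℝ)..s, A u) * A s := by
  refine (integral_congr fun s _ => ?_).trans
    (integral_const_mul_of_intervalIntegrable (Continuous.intervalIntegrable (by fun_prop) _ _) _)
  simp only [Matrix.cons_val_zero, Matrix.cons_val_one, Matrix.cons_val,
    integral_const_mul_mul_const_of_intervalIntegrable (hA.intervalIntegrable 0 s)]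
  rw [mul_assoc]

theorem orderedIntegrand3_120 (hA : Continuous A) (x : ℝ) :
    orderedIntegrand3 A 1 2 0 x = (∫ s in (0:ℝ)..x, A s * ∫ u in (0:ℝ)..s, A u) * A x := by
  refine (integral_congr fun s _ => ?_).trans
    (integral_mul_const_of_intervalIntegrable (Continuous.intervalIntegrable (by fun_prop) _ _) _)
  simp only [Matrix.cons_val_zero, Matrix.cons_val_one, Matrix.cons_val,
    integral_const_mul_mul_const_of_intervalIntegrable (hA.intervalIntegrable 0 s)]

theorem orderedIntegrand3_210 (hA : Continuous A) (x : ℝ) :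
    orderedIntegrand3 A 2 1 0 x = (∫ s in (0:ℝ)..x, (∫ u in (0:ℝ)..s, A u) * A s) * A x := by
  refine (integral_congr fun s _ => ?_).trans
    (integral_mul_const_of_intervalIntegrable (Continuous.intervalIntegrable (by fun_prop) _ _) _)
  simp only [Matrix.cons_val_zero, Matrix.cons_val_one, Matrix.cons_val, mul_assoc,
    integral_mul_const_of_intervalIntegrable (hA.intervalIntegrable 0 s)]

/-- `A(213)` and `A(312)` have `t₁` in the middle, so neither integrand is an iterated primitive;
their sum is, by integration by parts in `t₂`. -/
theorem orderedIntegrand3_102_add_201 (hA : Continuous A) (x : ℝ) :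
    orderedIntegrand3 A 1 0 2 x + orderedIntegrand3 A 2 0 1 x
      = (∫ s in (0:ℝ)..x, A s) * (A x * ∫ s in (0:ℝ)..x, A s) := by
  have hAx : Continuous fun s => A s * A x := by fun_prop
  calc orderedIntegrand3 A 1 0 2 x + orderedIntegrand3 A 2 0 1 x
      = ∫ s in (0:ℝ)..x,
          (A s * A x * ∫ u in (0:ℝ)..s, A u) + (∫ u in (0:ℝ)..s, A u * A x) * A s := by
        rw [integral_add (Continuous.intervalIntegrable (by fun_prop) _ _)
          (Continuous.intervalIntegrable (by fun_prop) _ _)]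
        congr 1 <;> refine integral_congr fun s _ => ?_
        · simp only [Matrix.cons_val_zero, Matrix.cons_val_one, Matrix.cons_val,
            integral_const_mul_of_intervalIntegrable (hA.intervalIntegrable 0 s)]
        · simp only [Matrix.cons_val_zero, Matrix.cons_val_one, Matrix.cons_val, mul_assoc,
            integral_mul_const_of_intervalIntegrable (hA.intervalIntegrable 0 s)]
    _ = (∫ s in (0:ℝ)..x, A s * A x) * ∫ s in (0:ℝ)..x, A s :=
        (integral_mul_integral_eq_integral hAx hA x).symm
    _ = (∫ s in (0:ℝ)..x, A s) * (A x * ∫ s in (0:ℝ)..x, A s) := by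
        rw [integral_mul_const_of_intervalIntegrable (hA.intervalIntegrable 0 x), mul_assoc]

theorem sum_orderedIntegrand3 (hA : Continuous A) (x : ℝ) :
    orderedIntegrand3 A 0 1 2 x + orderedIntegrand3 A 0 2 1 x
        + (orderedIntegrand3 A 1 0 2 x + orderedIntegrand3 A 2 0 1 x)
        + orderedIntegrand3 A 1 2 0 x + orderedIntegrand3 A 2 1 0 x
      = A x * ((∫ s in (0:ℝ)..x, A s) * (∫ s in (0:ℝ)..x, A s))
        + (∫ s in (0:ℝ)..x, A s) * A x * (∫ s in (0:ℝ)..x, A s)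
        + (∫ s in (0:ℝ)..x, A s) * (∫ s in (0:ℝ)..x, A s) * A x := by
  have hPP : (∫ s in (0:ℝ)..x, A s) * (∫ s in (0:ℝ)..x, A s)
      = (∫ s in (0:ℝ)..x, A s * ∫ u in (0:ℝ)..s, A u)
        + ∫ s in (0:ℝ)..x, (∫ u in (0:ℝ)..s, A u) * A s := by
    rw [integral_mul_integral_eq_integral hA hA, integral_add
      (Continuous.intervalIntegrable (by fun_prop) _ _)
      (Continuous.intervalIntegrable (by fun_prop) _ _)]
  rw [orderedIntegrand3_012 hA, orderedIntegrand3_021 hA, orderedIntegrand3_102_add_201 hA,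
    orderedIntegrand3_120 hA, orderedIntegrand3_210 hA, hPP]
  noncomm_ring

theorem integral_mul_integral_integral_eq_sum (hA : Continuous A) (t : ℝ) :
    (∫ s in (0:ℝ)..t, A s) * (∫ t₁ in (0:ℝ)..t, ∫ t₂ in (0:ℝ)..t₁, A t₁ * A t₂)
      = (∫ x in (0:ℝ)..t, orderedIntegrand3 A 0 1 2 x)
        + (∫ x in (0:ℝ)..t, orderedIntegrand3 A 1 0 2 x)
        + ∫ x in (0:ℝ)..t, orderedIntegrand3 A 2 0 1 x := by
  have hP₂ : ∀ t₁, ∫ t₂ in (0:ℝ)..t₁, A t₁ * A t₂ = A t₁ * ∫ s in (0:ℝ)..t₁, A s := fun t₁ =>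
    integral_const_mul_of_intervalIntegrable (hA.intervalIntegrable _ _) _
  simp only [hP₂]
  rw [integral_mul_integral_eq_integral hA (g := fun x => A x * ∫ s in (0:ℝ)..x, A s) (by fun_prop)]
  simp only [← orderedIntegrand3_012 hA, ← orderedIntegrand3_102_add_201 hA]
  repeat rw [intervalIntegral.integral_add]
  · rw [add_assoc]
  all_goals apply Continuous.intervalIntegrable; fun_prop

theorem integral_pow_three_eq (hA : Continuous A) (t : ℝ) :
    (∫ s in (0:ℝ)..t, A s) ^ 3 = ∫ x in (0:ℝ)..t,
      A x * ((∫ s in (0:ℝ)..x, A s) * (∫ s in (0:ℝ)..x, A s))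
        + (∫ s in (0:ℝ)..x, A s) * A x * (∫ s in (0:ℝ)..x, A s)
        + (∫ s in (0:ℝ)..x, A s) * (∫ s in (0:ℝ)..x, A s) * A x := by
  have hd : ∀ x, HasDerivAt (fun u => ∫ s in (0:ℝ)..u, A s) (A x) x := fun x =>
    (hA.integral_hasStrictDerivAt 0 x).hasDerivAt
  have hd3 : ∀ x ∈ Set.uIcc 0 t, HasDerivAt (fun u => (∫ s in (0:ℝ)..u, A s) ^ 3)
      (A x * ((∫ s in (0:ℝ)..x, A s) * (∫ s in (0:ℝ)..x, A s))
        + (∫ s in (0:ℝ)..x, A s) * A x * (∫ s in (0:ℝ)..x, A s)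
        + (∫ s in (0:ℝ)..x, A s) * (∫ s in (0:ℝ)..x, A s) * A x) x := fun x _ => by
    convert ((hd x).mul (hd x)).mul (hd x) using 1
    · ext u
      exact pow_three' _
    · simp only [Pi.mul_apply]
      noncomm_ring
  rw [integral_eq_sub_of_hasDerivAt hd3 (Continuous.intervalIntegrable (by fun_prop) _ _)]
  simp

theorem integral_pow_three_eq_sum (hA : Continuous A) (t : ℝ) :
    (∫ s in (0:ℝ)..t, A s) ^ 3
      = (∫ x in (0:ℝ)..t, orderedIntegrand3 A 0 1 2 x)
        + (∫ x in (0:ℝ)..t, orderedIntegrand3 A 0 2 1 x)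
        + (∫ x in (0:ℝ)..t, orderedIntegrand3 A 1 0 2 x)
        + (∫ x in (0:ℝ)..t, orderedIntegrand3 A 2 0 1 x)
        + (∫ x in (0:ℝ)..t, orderedIntegrand3 A 1 2 0 x)
        + ∫ x in (0:ℝ)..t, orderedIntegrand3 A 2 1 0 x := by
  rw [integral_pow_three_eq hA, ← integral_congr fun x _ => sum_orderedIntegrand3 hA x]
  repeat rw [intervalIntegral.integral_add]
  · abel
  all_goals apply Continuous.intervalIntegrable; fun_prop

end OrderedIntegrandIdentities

theorem wilcox_W3_eq_ordered_general
    {d : ℕ} (A : ℝ → Matrix (Fin d) (Fin d) ℂ)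
    (hA : Continuous A) (t : ℝ) :
    orderedIntegral3 A t 0 1 2
        - (∫ s in (0:ℝ)..t, A s) *
            (∫ t₁ in (0:ℝ)..t, ∫ t₂ in (0:ℝ)..t₁, A t₁ * A t₂)
        + ((1:ℂ)/3) • (∫ s in (0:ℝ)..t, A s) ^ 3
      = ((1:ℂ)/3) • orderedIntegral3 A t 0 1 2
        + ((1:ℂ)/3) • orderedIntegral3 A t 0 2 1
        - ((2:ℂ)/3) • orderedIntegral3 A t 1 0 2
        + ((1:ℂ)/3) • orderedIntegral3 A t 1 2 0
        - ((2:ℂ)/3) • orderedIntegral3 A t 2 0 1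
        + ((1:ℂ)/3) • orderedIntegral3 A t 2 1 0 := by
  simp only [orderedIntegral3_eq_integral]
  rw [integral_mul_integral_integral_eq_sum hA, integral_pow_three_eq_sum hA]
  module

/-- `W₃ = P₃ − P₁P₂ + ⅓P₁³ = ⅓A(123) + ⅓A(132) − ⅔A(213) + ⅓A(231) − ⅔A(312) + ⅓A(321)`. -/
theorem wilcox_W3_eq_ordered
    {d : ℕ} (A : ℝ → Matrix (Fin d) (Fin d) ℂ)
    (hA : Continuous A) (t : ℝ) (ht : 0 ≤ t) :
    orderedIntegral3 A t 0 1 2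
        - (∫ s in (0:ℝ)..t, A s) *
            (∫ t₁ in (0:ℝ)..t, ∫ t₂ in (0:ℝ)..t₁, A t₁ * A t₂)
        + ((1:ℂ)/3) • (∫ s in (0:ℝ)..t, A s) ^ 3
      = ((1:ℂ)/3) • orderedIntegral3 A t 0 1 2
        + ((1:ℂ)/3) • orderedIntegral3 A t 0 2 1
        - ((2:ℂ)/3) • orderedIntegral3 A t 1 0 2
        + ((1:ℂ)/3) • orderedIntegral3 A t 1 2 0
        - ((2:ℂ)/3) • orderedIntegral3 A t 2 0 1
        + ((1:ℂ)/3) • orderedIntegral3 A t 2 1 0 :=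
  wilcox_W3_eq_ordered_general A hA t
end
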